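/- Let C be a deducibility constraint system, θ a solution of C, and Ti a left-hand side of a constraint of C such that for every (T ⊩ v) ∈ C with T ⊊ Ti, the term v is a variable. Let u be any term. If there is a simple proof of Tiθ ⊢ u whose last inference rule is a decomposition (symmetric decryption, asymmetric decryption, or a projection), then there is a non-variable subterm t of Ti such that tθ = u. -/

import Mathlib

open scoped Classical

/-- Terms built from names, variables, pairing, symmetric/asymmetric encryption,
signatures and private keys. -/
inductive Tm where
  | var : ℕ → Tm
  | name : ℕ → Tm
  | pair : Tm → Tm → Tm
  | enc : Tm → Tm → Tm
  | enca : Tm → Tm → Tm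
  | sign : Tm → Tm → Tm
  | priv : Tm → Tm
deriving DecidableEq

namespace Tm

/-- The variables of a term. -/
def vars : Tm → Finset ℕ
  | var x => {x}
  | name _ => ∅
  | pair s t => s.vars ∪ t.vars
  | enc s t => s.vars ∪ t.vars
  | enca s t => s.vars ∪ t.vars
  | sign s t => s.vars ∪ t.vars
  | priv t => t.vars

/-- The subterms of a term. -/
def subterms : Tm → Finset Tm
  | var x => {var x}
  | name a => {name a}
  | pair s t => insert (pair s t) (s.subterms ∪ t.subterms)
  | enc s t => insert (enc s t) (s.subterms ∪ t.subterms)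
  | enca s t => insert (enca s t) (s.subterms ∪ t.subterms)
  | sign s t => insert (sign s t) (s.subterms ∪ t.subterms)
  | priv t => insert (priv t) t.subterms

/-- A term is a variable. -/
def IsVar : Tm → Prop
  | var _ => True
  | _ => False

end Tm

/-- The Dolev-Yao deduction relation `T ⊢ u`. -/
inductive Deduce : Finset Tm → Tm → Prop where
  | ax {T u} : u ∈ T → Deduce T u
  | pairI {T x y} : Deduce T x → Deduce T y → Deduce T (Tm.pair x y)
  | encI {T x y} : Deduce T x → Deduce T y → Deduce T (Tm.enc x y)
  | encaI {T x y} : Deduce T x → Deduce T y → Deduce T (Tm.enca x y)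
  | signI {T x y} : Deduce T x → Deduce T y → Deduce T (Tm.sign x y)
  | encE {T x y} : Deduce T (Tm.enc x y) → Deduce T y → Deduce T x
  | encaE {T x y} : Deduce T (Tm.enca x y) → Deduce T (Tm.priv y) → Deduce T x
  | fstE {T x y} : Deduce T (Tm.pair x y) → Deduce T x
  | sndE {T x y} : Deduce T (Tm.pair x y) → Deduce T y

/-- Substitutions. -/
def Subst := ℕ → Tm

/-- Applying a substitution to a term. -/
def Tm.subst (σ : Subst) : Tm → Tm
  | .var x => σ x
  | .name a => .name a
  | .pair s t => .pair (s.subst σ) (t.subst σ)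
  | .enc s t => .enc (s.subst σ) (t.subst σ)
  | .enca s t => .enca (s.subst σ) (t.subst σ)
  | .sign s t => .sign (s.subst σ) (t.subst σ)
  | .priv t => .priv (t.subst σ)

/-- The identity substitution. -/
def idSubst : Subst := Tm.var

/-- Composition of substitutions: `σ.comp τ` applies `σ` first, then `τ`. -/
def Subst.comp (σ τ : Subst) : Subst := fun x => (σ x).subst τ

/-- The variables of a finite set of terms. -/
def setVars (T : Finset Tm) : Finset ℕ := T.sup Tm.vars

/-- The subterms of a finite set of terms. -/
def stSet (T : Finset Tm) : Finset Tm := T.sup Tm.subterms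

/-- A deducibility constraint `T ⊩ u`: a (nonempty) finite set of terms and a term. -/
abbrev Cst := Finset Tm × Tm

/-- Applying a substitution to a constraint. -/
def conSubst (σ : Subst) (c : Cst) : Cst := (c.1.image (Tm.subst σ), c.2.subst σ)

/-- Applying a substitution to a constraint system. -/
def csSubst (σ : Subst) (S : Finset Cst) : Finset Cst := S.image (conSubst σ)

/-- The variables of a constraint system. -/
def sysVars (C : Finset Cst) : Finset ℕ := C.sup (fun c => setVars c.1 ∪ c.2.vars)

/-- The set `{x | (T' ⊩ x) ∈ S, T' ⊊ T}` of variables (as terms) occurring as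
right-hand sides of constraints of `S` whose left-hand side is strictly contained in `T`. -/
noncomputable def extraVars (S : Finset Cst) (T : Finset Tm) : Finset Tm :=
  (S.filter (fun c => c.1 ⊂ T ∧ c.2.IsVar)).image Prod.snd

/-- `C` is a deducibility constraint system: left-hand sides are nonempty,
totally ordered by inclusion, and every variable of a left-hand side `T` occurs in
the right-hand side of a constraint whose left-hand side is minimal among those whose
right-hand side contains the variable, and strictly included in `T`. -/
def IsCS (C : Finset Cst) : Prop :=
  (∀ c ∈ C, c.1.Nonempty) ∧
  (∀ c ∈ C, ∀ c' ∈ C, c.1 ⊆ c'.1 ∨ c'.1 ⊆ c.1) ∧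
  (∀ c ∈ C, ∀ x ∈ setVars c.1,
    ∃ c' ∈ C, x ∈ c'.2.vars ∧ c'.1 ⊂ c.1 ∧
      ∀ c'' ∈ C, x ∈ c''.2.vars → c'.1 ⊆ c''.1)

/-- A solution of a constraint system: a ground substitution whose domain is `V(C)`
such that `Tθ ⊢ uθ` for every constraint `(T ⊩ u) ∈ C`. -/
def IsSolution (θ : Subst) (C : Finset Cst) : Prop :=
  (∀ x ∈ sysVars C, (θ x).vars = ∅) ∧
  (∀ x, x ∉ sysVars C → θ x = Tm.var x) ∧
  (∀ c ∈ C, Deduce (c.1.image (Tm.subst θ)) (c.2.subst θ))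

/-- A (non-`⊥`) constraint system is solved if all right-hand sides are variables. -/
def Solved (C : Finset Cst) : Prop := ∀ c ∈ C, c.2.IsVar

/-- `σ` is a most general unifier of `t` and `u`. -/
def IsMGU (σ : Subst) (t u : Tm) : Prop :=
  t.subst σ = u.subst σ ∧
  (∀ x, x ∉ t.vars ∪ u.vars → σ x = Tm.var x) ∧
  (∀ x, (σ x).vars ⊆ t.vars ∪ u.vars) ∧
  (∀ δ : Subst, t.subst δ = u.subst δ → ∃ ρ : Subst, ∀ x, δ x = (σ x).subst ρ)

/-- The binary constructors `pair`, `enc`, `enca`, `sign`. -/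
inductive BinOp where
  | pair | enc | enca | sign

def BinOp.app : BinOp → Tm → Tm → Tm
  | .pair => Tm.pair
  | .enc => Tm.enc
  | .enca => Tm.enca
  | .sign => Tm.sign

/-- One step of simplification `C ⇝_σ C'` (result `none` represents `⊥`),
given by the rules R1, R2, R3, R3', R4, Rf. -/
inductive Step : Finset Cst → Subst → Option (Finset Cst) → Prop where
  | r1 {S : Finset Cst} {T : Finset Tm} {u : Tm} :
      (T, u) ∈ S →
      Deduce (T ∪ extraVars (S.erase (T, u)) T) u →
      Step S idSubst (some (S.erase (T, u)))
  | r2 {S : Finset Cst} {T : Finset Tm} {u t : Tm} {σ : Subst} :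
      (T, u) ∈ S → t ∈ stSet T → ¬ t.IsVar → ¬ u.IsVar → t ≠ u →
      IsMGU σ t u →
      Step S σ (some (csSubst σ S))
  | r3 {S : Finset Cst} {T : Finset Tm} {u t₁ t₂ : Tm} {σ : Subst} :
      (T, u) ∈ S → t₁ ∈ stSet T → t₂ ∈ stSet T → ¬ t₁.IsVar → ¬ t₂.IsVar →
      t₁ ≠ t₂ → IsMGU σ t₁ t₂ →
      Step S σ (some (csSubst σ S))
  | r3' {S : Finset Cst} {T : Finset Tm} {u t₁ t₂ t₃ : Tm} {σ : Subst} :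
      (T, u) ∈ S → Tm.enca t₁ t₂ ∈ stSet T → Tm.priv t₃ ∈ stSet T →
      t₂ ≠ t₃ → (t₂.IsVar ∨ t₃.IsVar) → IsMGU σ t₂ t₃ →
      Step S σ (some (csSubst σ S))
  | r4 {S : Finset Cst} {T : Finset Tm} {u : Tm} :
      (T, u) ∈ S → setVars T ∪ u.vars = ∅ → ¬ Deduce T u →
      Step S idSubst none
  | rf {S : Finset Cst} {T : Finset Tm} {u v : Tm} (b : BinOp) :
      (T, b.app u v) ∈ S →
      Step S idSubst (some (insert (T, u) (insert (T, v) (S.erase (T, b.app u v)))))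

/-- Sequences of simplification steps `C ⇝*_σ C'`, composing the substitutions. -/
inductive Steps : Finset Cst → Subst → Option (Finset Cst) → Prop where
  | refl (S) : Steps S idSubst (some S)
  | tail {S : Finset Cst} {σ : Subst} {S' : Finset Cst} {τ : Subst} {R} :
      Steps S σ (some S') → Step S' τ R → Steps S (σ.comp τ) R

/-- A security property, identified with its set of solutions (ground substitutions
making it true); `θ` solves `φσ` iff `σθ` solves `φ`. -/
def SecProp := Subst → Prop

/-- The instance `φσ` of a security property `φ` by a substitution `σ`. -/
def SecProp.subst (φ : SecProp) (σ : Subst) : SecProp := fun θ => φ (σ.comp θ)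

/-- `θ` is an attack for `φ` and `C` if it is a solution of both. -/
def IsAttack (θ : Subst) (C : Finset Cst) (φ : SecProp) : Prop :=
  IsSolution θ C ∧ φ θ

/-- One memorizing simplification step: `C;D ⇒_σ (C' \ D); (D ∪ (C \ C'))`. -/
inductive MStep : Finset Cst × Finset Cst → Subst → Finset Cst × Finset Cst → Prop where
  | mk {C D C' : Finset Cst} {σ : Subst} :
      Step C σ (some C') → MStep (C, D) σ (C' \ D, D ∪ (C \ C'))

/-- Sequences of memorizing simplification steps, composing the substitutions. -/
inductive MSteps : Finset Cst × Finset Cst → Subst → Finset Cst × Finset Cst → Prop where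
  | refl (P) : MSteps P idSubst P
  | tail {P : Finset Cst × Finset Cst} {σ : Subst} {Q : Finset Cst × Finset Cst}
      {τ : Subst} {R : Finset Cst × Finset Cst} :
      MSteps P σ Q → MStep Q τ R → MSteps P (σ.comp τ) R

/-- Proof trees for the Dolev-Yao deduction system (the left-hand side `T` is
the same in all sequents of a proof). -/
inductive PTree (T : Finset Tm) : Tm → Type where
  | ax {u} : u ∈ T → PTree T u
  | pairI {x y} : PTree T x → PTree T y → PTree T (Tm.pair x y)
  | encI {x y} : PTree T x → PTree T y → PTree T (Tm.enc x y)
  | encaI {x y} : PTree T x → PTree T y → PTree T (Tm.enca x y)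
  | signI {x y} : PTree T x → PTree T y → PTree T (Tm.sign x y)
  | encE {x y} : PTree T (Tm.enc x y) → PTree T y → PTree T x
  | encaE {x y} : PTree T (Tm.enca x y) → PTree T (Tm.priv y) → PTree T x
  | fstE {x y} : PTree T (Tm.pair x y) → PTree T x
  | sndE {x y} : PTree T (Tm.pair x y) → PTree T y

/-- The immediate subproof (child) relation on proof trees. -/
inductive Child (T : Finset Tm) : (Σ u : Tm, PTree T u) → (Σ u : Tm, PTree T u) → Prop where
  | pairI₁ {x y} (p : PTree T x) (q : PTree T y) : Child T ⟨x, p⟩ ⟨Tm.pair x y, .pairI p q⟩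
  | pairI₂ {x y} (p : PTree T x) (q : PTree T y) : Child T ⟨y, q⟩ ⟨Tm.pair x y, .pairI p q⟩
  | encI₁ {x y} (p : PTree T x) (q : PTree T y) : Child T ⟨x, p⟩ ⟨Tm.enc x y, .encI p q⟩
  | encI₂ {x y} (p : PTree T x) (q : PTree T y) : Child T ⟨y, q⟩ ⟨Tm.enc x y, .encI p q⟩
  | encaI₁ {x y} (p : PTree T x) (q : PTree T y) : Child T ⟨x, p⟩ ⟨Tm.enca x y, .encaI p q⟩
  | encaI₂ {x y} (p : PTree T x) (q : PTree T y) : Child T ⟨y, q⟩ ⟨Tm.enca x y, .encaI p q⟩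
  | signI₁ {x y} (p : PTree T x) (q : PTree T y) : Child T ⟨x, p⟩ ⟨Tm.sign x y, .signI p q⟩
  | signI₂ {x y} (p : PTree T x) (q : PTree T y) : Child T ⟨y, q⟩ ⟨Tm.sign x y, .signI p q⟩
  | encE₁ {x y} (p : PTree T (Tm.enc x y)) (q : PTree T y) :
      Child T ⟨Tm.enc x y, p⟩ ⟨x, .encE p q⟩
  | encE₂ {x y} (p : PTree T (Tm.enc x y)) (q : PTree T y) :
      Child T ⟨y, q⟩ ⟨x, .encE p q⟩
  | encaE₁ {x y} (p : PTree T (Tm.enca x y)) (q : PTree T (Tm.priv y)) :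
      Child T ⟨Tm.enca x y, p⟩ ⟨x, .encaE p q⟩
  | encaE₂ {x y} (p : PTree T (Tm.enca x y)) (q : PTree T (Tm.priv y)) :
      Child T ⟨Tm.priv y, q⟩ ⟨x, .encaE p q⟩
  | fstE₁ {x y} (p : PTree T (Tm.pair x y)) : Child T ⟨Tm.pair x y, p⟩ ⟨x, .fstE p⟩
  | sndE₁ {x y} (p : PTree T (Tm.pair x y)) : Child T ⟨Tm.pair x y, p⟩ ⟨y, .sndE p⟩

/-- `a` is a subproof of `b`. -/
def Subproof {T : Finset Tm} (a b : Σ u : Tm, PTree T u) : Prop :=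
  Relation.ReflTransGen (Child T) a b

/-- `a` is a strict subproof of `b`. -/
def StrictSubproof {T : Finset Tm} (a b : Σ u : Tm, PTree T u) : Prop :=
  Relation.TransGen (Child T) a b

/-- The set of terms used at axiom leaves of a proof tree. -/
def axLeaves {T : Finset Tm} : ∀ {u : Tm}, PTree T u → Set Tm
  | u, .ax _ => {u}
  | _, .pairI p q => axLeaves p ∪ axLeaves q
  | _, .encI p q => axLeaves p ∪ axLeaves q
  | _, .encaI p q => axLeaves p ∪ axLeaves q
  | _, .signI p q => axLeaves p ∪ axLeaves q
  | _, .encE p q => axLeaves p ∪ axLeaves q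
  | _, .encaE p q => axLeaves p ∪ axLeaves q
  | _, .fstE p => axLeaves p
  | _, .sndE p => axLeaves p

/-- No label (conclusion) is repeated along any branch of `π`. -/
def NoRepeat {T : Finset Tm} {u : Tm} (π : PTree T u) : Prop :=
  ∀ a b : Σ v : Tm, PTree T v, Subproof a ⟨u, π⟩ → StrictSubproof b a → b.1 ≠ a.1

/-- The last rule of a proof tree is a decomposition (symmetric decryption,
asymmetric decryption, or a projection). -/
def lastIsDecomp {T : Finset Tm} : ∀ {u : Tm}, PTree T u → Prop
  | _, .encE _ _ => True
  | _, .encaE _ _ => True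
  | _, .fstE _ => True
  | _, .sndE _ => True
  | _, _ => False

/-- Left minimality of a subproof `a` of a proof over the left-hand side `S`,
relative to the family `F` of (instantiated) left-hand sides: whenever `T' ⊢ concl(a)`
is derivable for some `T' ∈ F` with `T' ⊊ S`, replacing `S` by `T'` in all left
members still yields a proof, i.e. all axiom leaves of `a` belong to `T'`. -/
def LeftMinimalFam (F : Set (Finset Tm)) (S : Finset Tm)
    (a : Σ v : Tm, PTree S v) : Prop :=
  ∀ T' ∈ F, T' ⊂ S → Deduce T' a.1 → axLeaves a.2 ⊆ ↑T'

/-- A proof of `S ⊢ u` is simple (w.r.t. the family `F`) if all its subproofs are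
left minimal and no label is repeated on any branch. -/
def SimpleFam (F : Set (Finset Tm)) (S : Finset Tm) {u : Tm} (π : PTree S u) : Prop :=
  (∀ a : Σ v : Tm, PTree S v, Subproof a ⟨u, π⟩ → LeftMinimalFam F S a) ∧ NoRepeat π

/-!
Follow the major premises upwards from the last rule: by simplicity none of them is a
composition (one of its premises would repeat the conclusion of the decomposition below it),
so the chain ends at an axiom `v ∈ Tiθ`, and at each decomposition the conclusion is `sθ` for
an immediate subterm `s` of a subterm of `Ti`. Whenever this `s` is a variable `x`, there is a
constraint `T_x ⊩ x` with `T_x ⊊ Ti`; then `T_xθ ⊢ xθ`, so by left minimality the whole proof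
lives over `T_xθ`, and we conclude by induction on the left-hand side.
-/

namespace Tm

lemma mem_subterms_self (t : Tm) : t ∈ t.subterms := by
  cases t <;> simp [subterms]

lemma subterms_subset_of_mem {s t : Tm} (h : s ∈ t.subterms) : s.subterms ⊆ t.subterms := by
  induction t with
  | var | name => simp only [subterms, Finset.mem_singleton] at h; rw [h]
  | pair a b iha ihb | enc a b iha ihb | enca a b iha ihb | sign a b iha ihb =>
    simp only [subterms, Finset.mem_insert, Finset.mem_union] at h
    rcases h with rfl | h | h
    · rfl
    · exact (iha h).trans (by intro z; simp +contextual [subterms])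
    · exact (ihb h).trans (by intro z; simp +contextual [subterms])
  | priv a iha =>
    simp only [subterms, Finset.mem_insert] at h
    rcases h with rfl | h
    · rfl
    · exact (iha h).trans (Finset.subset_insert _ _)

lemma vars_subset_of_mem_subterms {s t : Tm} (h : s ∈ t.subterms) : s.vars ⊆ t.vars := by
  induction t with
  | var | name => simp only [subterms, Finset.mem_singleton] at h; rw [h]
  | pair a b iha ihb | enc a b iha ihb | enca a b iha ihb | sign a b iha ihb =>
    simp only [subterms, Finset.mem_insert, Finset.mem_union] at h
    rcases h with rfl | h | h
    · rfl
    · exact (iha h).trans Finset.subset_union_left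
    · exact (ihb h).trans Finset.subset_union_right
  | priv a iha =>
    simp only [subterms, Finset.mem_insert] at h
    rcases h with rfl | h
    · rfl
    · exact iha h

lemma isVar_iff {t : Tm} : t.IsVar ↔ ∃ x, t = var x := by
  cases t <;> simp [IsVar]

end Tm

lemma mem_stSet_of_mem {T : Finset Tm} {t : Tm} (h : t ∈ T) : t ∈ stSet T :=
  Finset.mem_sup.mpr ⟨t, h, t.mem_subterms_self⟩

lemma mem_stSet_of_mem_subterms {T : Finset Tm} {s t : Tm} (ht : t ∈ stSet T)
    (hs : s ∈ t.subterms) : s ∈ stSet T := by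
  obtain ⟨r, hr, htr⟩ := Finset.mem_sup.mp ht
  exact Finset.mem_sup.mpr ⟨r, hr, Tm.subterms_subset_of_mem htr hs⟩

lemma stSet_mono {T T' : Finset Tm} (h : T ⊆ T') : stSet T ⊆ stSet T' :=
  Finset.sup_mono h

lemma vars_subset_setVars_of_mem_stSet {T : Finset Tm} {t : Tm} (ht : t ∈ stSet T) :
    t.vars ⊆ setVars T := by
  obtain ⟨r, hr, htr⟩ := Finset.mem_sup.mp ht
  exact (Tm.vars_subset_of_mem_subterms htr).trans (Finset.le_sup (f := Tm.vars) hr)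

inductive Decomposes : Tm → Tm → Prop
  | enc (x y : Tm) : Decomposes (.enc x y) x
  | enca (x y : Tm) : Decomposes (.enca x y) x
  | fst (x y : Tm) : Decomposes (.pair x y) x
  | snd (x y : Tm) : Decomposes (.pair x y) y

lemma Decomposes.exists_mem_subterms_subst_eq {θ : Subst} {s v u : Tm} (hd : Decomposes v u)
    (hs : ¬ s.IsVar) (hsv : s.subst θ = v) : ∃ s' ∈ s.subterms, s'.subst θ = u := by
  cases hd <;> cases s <;>
    simp only [Tm.subst, Tm.IsVar, not_true_eq_false, reduceCtorEq, Tm.enc.injEq, Tm.enca.injEq,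
      Tm.pair.injEq] at hs hsv
  all_goals first
    | exact ⟨_, by simp [Tm.subterms, Tm.mem_subterms_self], hsv.1⟩
    | exact ⟨_, by simp [Tm.subterms, Tm.mem_subterms_self], hsv.2⟩

def lastIsComp {T : Finset Tm} : ∀ {u : Tm}, PTree T u → Prop
  | _, .pairI _ _ => True
  | _, .encI _ _ => True
  | _, .encaI _ _ => True
  | _, .signI _ _ => True
  | _, _ => False

lemma not_lastIsComp_of_lastIsDecomp {T : Finset Tm} {u : Tm} {π : PTree T u}
    (h : lastIsDecomp π) : ¬ lastIsComp π := by
  cases π <;> simp_all [lastIsDecomp, lastIsComp]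

lemma Decomposes.exists_child_of_lastIsComp {S : Finset Tm} {v u : Tm} (hd : Decomposes v u)
    {p : PTree S v} (hp : lastIsComp p) : ∃ a : PTree S u, Child S ⟨u, a⟩ ⟨v, p⟩ := by
  cases hd <;> cases p <;> simp only [lastIsComp] at hp
  exacts [⟨_, .encI₁ _ _⟩, ⟨_, .encaI₁ _ _⟩, ⟨_, .pairI₁ _ _⟩, ⟨_, .pairI₂ _ _⟩]

lemma NoRepeat.not_lastIsComp_of_child {S : Finset Tm} {u v : Tm} {π : PTree S u}
    {p : PTree S v} (hπ : NoRepeat π) (hchild : Child S ⟨v, p⟩ ⟨u, π⟩) (hd : Decomposes v u) :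
    ¬ lastIsComp p := fun hp ↦ by
  obtain ⟨a, ha⟩ := hd.exists_child_of_lastIsComp hp
  exact hπ _ ⟨u, a⟩ .refl (.tail (.single ha) hchild) rfl

lemma axLeaves_subset {T : Finset Tm} {u : Tm} (π : PTree T u) : axLeaves π ⊆ ↑T := by
  induction π with
  | ax h => simpa [axLeaves] using h
  | pairI _ _ ihp ihq | encI _ _ ihp ihq | encaI _ _ ihp ihq | signI _ _ ihp ihq
  | encE _ _ ihp ihq | encaE _ _ ihp ihq => exact Set.union_subset ihp ihq
  | fstE _ ihp | sndE _ ihp => exact ihp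

lemma Child.axLeaves_subset {T : Finset Tm} {a b : Σ u : Tm, PTree T u} (h : Child T a b) :
    axLeaves a.2 ⊆ axLeaves b.2 := by
  cases h <;> simp [axLeaves]

lemma SimpleFam.of_subproof {F : Set (Finset Tm)} {S : Finset Tm} {u v : Tm} {π : PTree S u}
    {p : PTree S v} (hπ : SimpleFam F S π) (h : Subproof ⟨v, p⟩ ⟨u, π⟩) : SimpleFam F S p :=
  ⟨fun a ha ↦ hπ.1 a (ha.trans h), fun a b ha hb ↦ hπ.2 a b (ha.trans h) hb⟩

lemma LeftMinimalFam.axLeaves_subset_of_subset {F : Set (Finset Tm)} {S T : Finset Tm}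
    {a : Σ v : Tm, PTree S v} (ha : LeftMinimalFam F S a) (hT : T ∈ F) (hTS : T ⊆ S)
    (hded : Deduce T a.1) : axLeaves a.2 ⊆ ↑T := by
  rcases hTS.eq_or_ssubset with rfl | hlt
  · exact axLeaves_subset a.2
  · exact ha T hT hlt hded

lemma IsCS.exists_ssubset_deduce_subst_var {C : Finset Cst} {θ : Subst} (hC : IsCS C)
    (hθ : IsSolution θ C) {T : Finset Tm} {r : Tm} (hT : (T, r) ∈ C)
    (hbelow : ∀ c ∈ C, c.1 ⊂ T → c.2.IsVar) {x : ℕ} (hx : x ∈ setVars T) :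
    ∃ c ∈ C, c.1 ⊂ T ∧ Deduce (c.1.image (Tm.subst θ)) (θ x) := by
  obtain ⟨c, hcC, hxc, hcT, -⟩ := hC.2.2 (T, r) hT x hx
  obtain ⟨y, hy⟩ := Tm.isVar_iff.mp (hbelow c hcC hcT)
  rw [hy, Tm.vars, Finset.mem_singleton] at hxc
  refine ⟨c, hcC, hcT, ?_⟩
  simpa [hy, hxc, Tm.subst] using hθ.2.2 c hcC

theorem exists_nonVar_subterm_of_simpleFam {C : Finset Cst} {θ : Subst} (hC : IsCS C)
    (hθ : IsSolution θ C) {S T : Finset Tm} {r : Tm} (hT : (T, r) ∈ C)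
    (hbelow : ∀ c ∈ C, c.1 ⊂ T → c.2.IsVar) (hTS : T.image (Tm.subst θ) ⊆ S)
    {F : Set (Finset Tm)} (hF : ∀ c ∈ C, c.1.image (Tm.subst θ) ∈ F)
    {u : Tm} (π : PTree S u) (hs : SimpleFam F S π)
    (hl : axLeaves π ⊆ ↑(T.image (Tm.subst θ))) (hπ : ¬ lastIsComp π) :
    ∃ t ∈ stSet T, ¬ t.IsVar ∧ t.subst θ = u := by
  induction T using Finset.strongInduction generalizing r u π with
  | H T ih =>
    have descend : ∀ {u} (π : PTree S u), SimpleFam F S π → ¬ lastIsComp π →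
        ∀ s ∈ stSet T, s.subst θ = u → ∃ t ∈ stSet T, ¬ t.IsVar ∧ t.subst θ = u := by
      intro u π hs hπ s hsT hsu
      by_cases hsv : s.IsVar
      · obtain ⟨x, rfl⟩ := Tm.isVar_iff.mp hsv
        obtain ⟨c, hcC, hcT, hded⟩ := hC.exists_ssubset_deduce_subst_var hθ hT hbelow
          (vars_subset_setVars_of_mem_stSet hsT (Finset.mem_singleton_self x))
        have hcS : c.1.image (Tm.subst θ) ⊆ S := (Finset.image_subset_image hcT.subset).trans hTS
        have hlc := (hs.1 _ .refl).axLeaves_subset_of_subset (hF c hcC) hcS (hsu ▸ hded)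
        obtain ⟨t, ht, htv, htu⟩ :=
          ih c.1 hcT hcC (fun c' hc' h ↦ hbelow c' hc' (h.trans hcT)) hcS π hs hlc hπ
        exact ⟨t, stSet_mono hcT.subset ht, htv, htu⟩
      · exact ⟨s, hsT, hsv, hsu⟩
    have decompose : ∀ {u v} {π : PTree S u} {p : PTree S v}, Child S ⟨v, p⟩ ⟨u, π⟩ →
        Decomposes v u → SimpleFam F S π → axLeaves π ⊆ ↑(T.image (Tm.subst θ)) →
        ¬ lastIsComp π →
        (SimpleFam F S p → axLeaves p ⊆ ↑(T.image (Tm.subst θ)) → ¬ lastIsComp p →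
          ∃ t ∈ stSet T, ¬ t.IsVar ∧ t.subst θ = v) →
        ∃ t ∈ stSet T, ¬ t.IsVar ∧ t.subst θ = u := by
      intro u v π p hchild hd hs hl hπ ihp
      obtain ⟨s, hsT, hsv, hsθ⟩ := ihp (hs.of_subproof (.single hchild))
        (hchild.axLeaves_subset.trans hl) (hs.2.not_lastIsComp_of_child hchild hd)
      obtain ⟨s', hs's, rfl⟩ := hd.exists_mem_subterms_subst_eq hsv hsθ
      exact descend π hs hπ s' (mem_stSet_of_mem_subterms hsT hs's) rfl
    induction π with
    | ax h =>
      obtain ⟨s, hsT, rfl⟩ := Finset.mem_image.mp (hl rfl)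
      exact descend _ hs hπ s (mem_stSet_of_mem hsT) rfl
    | pairI | encI | encaI | signI => exact absurd trivial hπ
    | encE p q ihp => exact decompose (.encE₁ p q) (.enc _ _) hs hl hπ ihp
    | encaE p q ihp => exact decompose (.encaE₁ p q) (.enca _ _) hs hl hπ ihp
    | fstE p ihp => exact decompose (.fstE₁ p) (.fst _ _) hs hl hπ ihp
    | sndE p ihp => exact decompose (.sndE₁ p) (.snd _ _) hs hl hπ ihp

/-- if `C` is a deducibility constraint system, `θ` a solution of `C`,
`Ti` a left-hand side of `C` such that all constraints with strictly smaller left-hand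
side have a variable as right-hand side, and there is a simple proof of `Tiθ ⊢ u`
whose last rule is a decomposition, then some non-variable subterm `t` of `Ti`
satisfies `tθ = u`. -/
theorem decomposition_last_rule (C : Finset Cst) (hC : IsCS C)
    (θ : Subst) (hθ : IsSolution θ C)
    (Ti : Finset Tm) (w : Tm) (hTi : (Ti, w) ∈ C)
    (hbelow : ∀ c ∈ C, c.1 ⊂ Ti → c.2.IsVar)
    (u : Tm) (π : PTree (Ti.image (Tm.subst θ)) u)
    (hsimple : SimpleFam {S | ∃ c ∈ C, S = c.1.image (Tm.subst θ)}
      (Ti.image (Tm.subst θ)) π)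
    (hdecomp : lastIsDecomp π) :
    ∃ t ∈ stSet Ti, ¬ t.IsVar ∧ t.subst θ = u :=
  exists_nonVar_subterm_of_simpleFam hC hθ hTi hbelow subset_rfl
    (fun c hc ↦ Set.mem_ofPred.mpr ⟨c, hc, rfl⟩) π hsimple (axLeaves_subset π)
    (not_lastIsComp_of_lastIsDecomp hdecomp)
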